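/- arXiv:2004.02180 — 3 statements merged into one kernel-verified Lean document; each statement's English description precedes it below -/
import Mathlib

section
/- Let m ≤ n and let {A,B} be an (m,p,n)-GMP with GSVD as in the context, with generalized singular values (αᵢ, βᵢ). Then for every 1 ≤ i ≤ m, max_{Ψ ∈ 𝕌_m} Re tr(Aᴴ Ψᴴ 𝒬_i Ψ A (AᴴA + BᴴB)^{-1}) = α₁² + α₂² + ⋯ + αᵢ². -/
open Matrix BigOperators
open scoped ComplexOrder
open Finset

/-!
Write `A = U Σ R` with `AᴴA + BᴴB = RᴴR`. Then `A (AᴴA + BᴴB)⁻¹ Aᴴ = U D Uᴴ` with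
`D = diag(α₁², …, α_m²)`, so by cyclicity of the trace the objective at `Φ` is
`Re tr(Ψᴴ 𝒬 Ψ D)` with `Ψ = Φ U`, which again ranges over all unitaries. For unitary `Ψ` this is
`∑ⱼ cⱼ αⱼ²` with `cⱼ = ∑_{k ≤ i} |Ψₖⱼ|²`: the `cⱼ` lie in `[0, 1]` and add up to `i`, and against
decreasing weights such a combination is at most `α₁² + ⋯ + αᵢ²`, with equality at `Ψ = 1`.
-/

theorem Finset.sum_mul_le_sum_Iic_of_antitone {ι : Type*} [Fintype ι] [LinearOrder ι]
    [LocallyFiniteOrderBot ι] {a c : ι → ℝ} (ha : Antitone a) (hc0 : ∀ j, 0 ≤ c j)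
    (hc1 : ∀ j, c j ≤ 1) {i : ι} (hc : ∑ j, c j = #(Iic i)) :
    ∑ j, c j * a j ≤ ∑ j ∈ Iic i, a j := by
  have hterm : ∀ j, (c j - if j ∈ Iic i then 1 else 0) * (a j - a i) ≤ 0 := by
    intro j
    split_ifs with hj
    · exact mul_nonpos_of_nonpos_of_nonneg (by linarith [hc1 j])
        (by linarith [ha (mem_Iic.mp hj)])
    · exact mul_nonpos_of_nonneg_of_nonpos (by linarith [hc0 j])
        (by linarith [ha (not_le.mp (mt mem_Iic.mpr hj)).le])
  have hexpand : ∑ j, (c j - if j ∈ Iic i then 1 else 0) * (a j - a i)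
      = ∑ j, c j * a j - ∑ j ∈ Iic i, a j := by
    simp only [sub_mul, mul_sub, sum_sub_distrib, ← sum_mul, hc, ite_mul, one_mul, zero_mul,
      sum_ite_mem, univ_inter, sum_const, nsmul_eq_mul]
    ring
  linarith [sum_nonpos fun j (_ : j ∈ univ) => hterm j]

namespace Matrix

section Unitary

variable {ι κ : Type*} [Fintype ι]

theorem conjTranspose_mul_self_apply_self (Ψ : Matrix ι κ ℂ) (j : κ) :
    (Ψᴴ * Ψ) j j = ((∑ k, Complex.normSq (Ψ k j) : ℝ) : ℂ) := by
  simp [mul_apply, Complex.normSq_eq_conj_mul_self]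

theorem mul_conjTranspose_self_apply_self (Ψ : Matrix κ ι ℂ) (k : κ) :
    (Ψ * Ψᴴ) k k = ((∑ j, Complex.normSq (Ψ k j) : ℝ) : ℂ) := by
  simp [mul_apply, Complex.normSq_eq_conj_mul_self, mul_comm]

variable [DecidableEq ι] {Ψ : Matrix ι ι ℂ}

theorem sum_normSq_apply_left_of_mem_unitaryGroup (hΨ : Ψ ∈ unitaryGroup ι ℂ) (j : ι) :
    ∑ k, Complex.normSq (Ψ k j) = 1 := by
  have h : (Ψᴴ * Ψ) j j = 1 := by
    rw [← star_eq_conjTranspose, Unitary.star_mul_self_of_mem hΨ, one_apply_eq]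
  rw [conjTranspose_mul_self_apply_self] at h
  exact_mod_cast h

theorem sum_normSq_apply_right_of_mem_unitaryGroup (hΨ : Ψ ∈ unitaryGroup ι ℂ) (k : ι) :
    ∑ j, Complex.normSq (Ψ k j) = 1 := by
  have h : (Ψ * Ψᴴ) k k = 1 := by
    rw [← star_eq_conjTranspose, Unitary.mul_star_self_of_mem hΨ, one_apply_eq]
  rw [mul_conjTranspose_self_apply_self] at h
  exact_mod_cast h

theorem trace_conjTranspose_mul_diagonal_mul_mul_diagonal (Ψ : Matrix ι ι ℂ) (q a : ι → ℝ) :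
    (Ψᴴ * diagonal (fun k => (q k : ℂ)) * Ψ * diagonal (fun j => (a j : ℂ))).trace
      = ((∑ j, (∑ k, q k * Complex.normSq (Ψ k j)) * a j : ℝ) : ℂ) := by
  simp only [trace, diag_apply, mul_apply, conjTranspose_apply, RCLike.star_def, diagonal_apply,
    mul_ite, mul_zero, Finset.sum_ite_eq', Finset.mem_univ, ↓reduceIte, Finset.sum_mul,
    Complex.ofReal_sum, Complex.ofReal_mul, Complex.normSq_eq_conj_mul_self]
  refine Finset.sum_congr rfl fun j _ => Finset.sum_congr rfl fun k _ => ?_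
  ring

end Unitary


section Reduction

variable {𝕜 l m n : Type*} [CommRing 𝕜] [StarRing 𝕜] [Fintype m] [Fintype n]

theorem conjTranspose_mul_self_of_mem_unitaryGroup_mul [DecidableEq m] {U : Matrix m m 𝕜}
    (hU : U ∈ unitaryGroup m 𝕜) (S : Matrix m n 𝕜) (R : Matrix n n 𝕜) :
    (U * S * R)ᴴ * (U * S * R) = Rᴴ * (Sᴴ * S) * R := by
  have hUU : Uᴴ * U = 1 := Unitary.star_mul_self_of_mem hU
  simp only [conjTranspose_mul, Matrix.mul_assoc]
  rw [← Matrix.mul_assoc Uᴴ, hUU, Matrix.one_mul]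

theorem mul_inv_conjTranspose_mul_self_mul_conjTranspose [Fintype l] [DecidableEq n]
    (U : Matrix l m 𝕜) (S : Matrix m n 𝕜) {R : Matrix n n 𝕜} (hR : IsUnit R.det) :
    U * S * R * (Rᴴ * R)⁻¹ * (U * S * R)ᴴ = U * (S * Sᴴ) * Uᴴ := by
  have hR' : IsUnit Rᴴ.det := by rw [det_conjTranspose]; exact hR.star
  rw [mul_inv_rev]
  calc U * S * R * (R⁻¹ * Rᴴ⁻¹) * (U * S * R)ᴴ
      = U * S * (R * R⁻¹) * (Rᴴ⁻¹ * Rᴴ) * Sᴴ * Uᴴ := by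
        simp only [conjTranspose_mul, Matrix.mul_assoc]
    _ = U * (S * Sᴴ) * Uᴴ := by
        rw [mul_nonsing_inv R hR, nonsing_inv_mul Rᴴ hR']
        simp only [Matrix.mul_one, Matrix.mul_assoc]

theorem trace_conjTranspose_mul_conj_mul_of_mul_mul_conjTranspose_eq [Fintype l]
    {A : Matrix m n 𝕜} {N : Matrix n n 𝕜} {U : Matrix m l 𝕜} {D : Matrix l l 𝕜}
    (h : A * N * Aᴴ = U * D * Uᴴ) (Φ Q : Matrix m m 𝕜) :
    trace (Aᴴ * Φᴴ * Q * Φ * A * N) = trace ((Φ * U)ᴴ * Q * (Φ * U) * D) := by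
  calc trace (Aᴴ * Φᴴ * Q * Φ * A * N) = trace (Aᴴ * (Φᴴ * Q * Φ * A * N)) := by
        simp only [Matrix.mul_assoc]
    _ = trace (Φᴴ * Q * Φ * (A * N * Aᴴ)) := by
        rw [trace_mul_comm]; simp only [Matrix.mul_assoc]
    _ = trace (Φᴴ * Q * Φ * U * D * Uᴴ) := by
        rw [h]; simp only [Matrix.mul_assoc]
    _ = trace (Uᴴ * (Φᴴ * Q * Φ) * U * D) := by
        rw [trace_mul_comm]; simp only [Matrix.mul_assoc]
    _ = trace ((Φ * U)ᴴ * Q * (Φ * U) * D) := by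
        simp only [conjTranspose_mul, Matrix.mul_assoc]

end Reduction

section RectDiagonal

def rectDiagonal (m : ℕ) {n : ℕ} (d : Fin n → ℝ) : Matrix (Fin m) (Fin n) ℂ :=
  of fun k l => if (k : ℕ) = l then (d l : ℂ) else 0

variable {m n : ℕ}

theorem rectDiagonal_mul_conjTranspose (hmn : m ≤ n) (d : Fin n → ℝ) :
    rectDiagonal m d * (rectDiagonal m d)ᴴ
      = diagonal fun k => ((d (Fin.castLE hmn k) ^ 2 : ℝ) : ℂ) := by
  ext k k'
  have hk : ∀ l : Fin n, (k : ℕ) = l ↔ Fin.castLE hmn k = l := by simp [Fin.ext_iff]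
  simp only [rectDiagonal, mul_apply, conjTranspose_apply, of_apply, hk]
  rcases eq_or_ne k k' with rfl | hne
  · simp [sq]
  · simp [hne, Fin.val_ne_iff.mpr hne.symm]

theorem conjTranspose_rectDiagonal_mul {d : Fin n → ℝ} (hd : ∀ l : Fin n, m ≤ l → d l = 0) :
    (rectDiagonal m d)ᴴ * rectDiagonal m d = diagonal fun l => ((d l ^ 2 : ℝ) : ℂ) := by
  ext l l'
  by_cases hl : (l : ℕ) < m
  · have hk : ∀ k : Fin m, (k : ℕ) = l ↔ k = ⟨l, hl⟩ := by simp [Fin.ext_iff]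
    simp only [rectDiagonal, mul_apply, conjTranspose_apply, of_apply, hk]
    rcases eq_or_ne l l' with rfl | hne
    · simp [hk, sq]
    · rw [diagonal_apply_ne _ hne]
      refine sum_eq_zero fun k _ => ?_
      split_ifs with h1 h2 <;> simp_all [Fin.ext_iff]
  · simp [rectDiagonal, mul_apply, diagonal_apply, hd l (not_lt.mp hl)]

end RectDiagonal

section PartialIdentity

variable {ι : Type*} [Fintype ι] [LinearOrder ι] [LocallyFiniteOrderBot ι]

-- The paper's `𝒬_{i+1}`: indices are 0-based.
def partialIdentity (i : ι) : Matrix ι ι ℂ := diagonal fun k => if k ≤ i then 1 else 0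

omit [Fintype ι] in
theorem partialIdentity_eq_diagonal_ofReal (i : ι) :
    partialIdentity i = diagonal fun k => ((if k ∈ Iic i then 1 else 0 : ℝ) : ℂ) := by
  simp only [partialIdentity, mem_Iic, apply_ite Complex.ofReal, Complex.ofReal_one,
    Complex.ofReal_zero]

theorem re_trace_conjTranspose_mul_partialIdentity_mul_mul_diagonal (Ψ : Matrix ι ι ℂ)
    (i : ι) (a : ι → ℝ) :
    (Ψᴴ * partialIdentity i * Ψ * diagonal (fun j => (a j : ℂ))).trace.re
      = ∑ j, (∑ k ∈ Iic i, Complex.normSq (Ψ k j)) * a j := by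
  simp only [partialIdentity_eq_diagonal_ofReal, trace_conjTranspose_mul_diagonal_mul_mul_diagonal,
    Complex.ofReal_re, ite_mul, one_mul, zero_mul, sum_ite_mem, univ_inter]

theorem re_trace_conjTranspose_mul_partialIdentity_mul_mul_diagonal_le {Ψ : Matrix ι ι ℂ}
    (hΨ : Ψ ∈ unitaryGroup ι ℂ) (i : ι) {a : ι → ℝ} (ha : Antitone a) :
    (Ψᴴ * partialIdentity i * Ψ * diagonal (fun j => (a j : ℂ))).trace.re
      ≤ ∑ j ∈ Iic i, a j := by
  rw [re_trace_conjTranspose_mul_partialIdentity_mul_mul_diagonal]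
  refine sum_mul_le_sum_Iic_of_antitone ha (fun j => sum_nonneg fun k _ => Complex.normSq_nonneg _)
    (fun j => ?_) ?_
  · rw [← sum_normSq_apply_left_of_mem_unitaryGroup hΨ j]
    exact sum_le_univ_sum_of_nonneg fun k => Complex.normSq_nonneg _
  · rw [sum_comm]
    simp [sum_normSq_apply_right_of_mem_unitaryGroup hΨ]

theorem trace_partialIdentity_mul_diagonal (i : ι) (a : ι → ℝ) :
    (partialIdentity i * diagonal (fun j => (a j : ℂ))).trace = ((∑ j ∈ Iic i, a j : ℝ) : ℂ) := by
  simp [partialIdentity, diagonal_mul_diagonal, trace_diagonal, ← sum_filter, filter_ge_eq_Iic]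

theorem iSup_re_trace_conjTranspose_mul_partialIdentity_mul_mul_diagonal (i : ι) {a : ι → ℝ}
    (ha : Antitone a) :
    ⨆ Ψ : unitaryGroup ι ℂ,
      ((Ψ : Matrix ι ι ℂ)ᴴ * partialIdentity i * Ψ * diagonal (fun j => (a j : ℂ))).trace.re
      = ∑ j ∈ Iic i, a j := by
  have hle : ∀ Ψ : unitaryGroup ι ℂ,
      ((Ψ : Matrix ι ι ℂ)ᴴ * partialIdentity i * Ψ * diagonal (fun j => (a j : ℂ))).trace.re
        ≤ ∑ j ∈ Iic i, a j :=
    fun Ψ => re_trace_conjTranspose_mul_partialIdentity_mul_mul_diagonal_le Ψ.2 i ha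
  refine le_antisymm (ciSup_le hle) (le_ciSup_of_le ⟨_, Set.forall_mem_range.2 hle⟩ 1 ?_)
  simp [trace_partialIdentity_mul_diagonal]

end PartialIdentity

end Matrix

theorem stmt10_general
    {m p n : ℕ} (hmn : m ≤ n)
    (A : Matrix (Fin m) (Fin n) ℂ) (B : Matrix (Fin p) (Fin n) ℂ)
    (U : Matrix (Fin m) (Fin m) ℂ) (hU : U ∈ Matrix.unitaryGroup (Fin m) ℂ)
    (R : Matrix (Fin n) (Fin n) ℂ) (hR : IsUnit R.det)
    (α : Fin n → ℝ)
    (hα0 : ∀ k, 0 ≤ α k) (hmono : Antitone α)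
    (hzero : ∀ k : Fin n, m ≤ (k : ℕ) → α k = 0)
    (hA : A = U * (Matrix.of fun (k : Fin m) (l : Fin n) =>
        if (k : ℕ) = (l : ℕ) then Complex.ofReal (α l) else 0) * R)
    (hBB : Bᴴ * B = Rᴴ * Matrix.diagonal (fun l => Complex.ofReal (1 - α l ^ 2)) * R)
    (i : Fin n) (him : (i : ℕ) < m) :
(⨆ Φ : Matrix.unitaryGroup (Fin m) ℂ,
      (Matrix.trace (Aᴴ * (Φ : Matrix (Fin m) (Fin m) ℂ)ᴴ *
        Matrix.diagonal (fun k : Fin m => if (k : ℕ) ≤ (i : ℕ) then (1 : ℂ) else 0) *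
        (Φ : Matrix (Fin m) (Fin m) ℂ) * A * (Aᴴ * A + Bᴴ * B)⁻¹)).re) =
      ∑ k ∈ Finset.Iic i, α k ^ 2 := by
  replace hA : A = U * rectDiagonal m α * R := hA
  set D : Matrix (Fin m) (Fin m) ℂ := diagonal fun k => ((α (Fin.castLE hmn k) ^ 2 : ℝ) : ℂ)
  have hM : Aᴴ * A + Bᴴ * B = Rᴴ * R := by
    rw [hBB, hA, conjTranspose_mul_self_of_mem_unitaryGroup_mul hU,
      conjTranspose_rectDiagonal_mul hzero, ← Matrix.add_mul, ← Matrix.mul_add, diagonal_add]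
    simp only [← Complex.ofReal_add, add_sub_cancel, Complex.ofReal_one, diagonal_one,
      Matrix.mul_one]
  have hAMA : A * (Aᴴ * A + Bᴴ * B)⁻¹ * Aᴴ = U * D * Uᴴ := by
    rw [hM, hA, mul_inv_conjTranspose_mul_self_mul_conjTranspose _ _ hR,
      rectDiagonal_mul_conjTranspose hmn]
  have hanti : Antitone fun k : Fin m => α (Fin.castLE hmn k) ^ 2 :=
    fun x y hxy => pow_le_pow_left₀ (hα0 _) (hmono hxy) 2
  let u : unitaryGroup (Fin m) ℂ := ⟨U, hU⟩
  let i' : Fin m := ⟨i, him⟩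
  let f : unitaryGroup (Fin m) ℂ → ℝ := fun Ψ =>
    ((Ψ : Matrix (Fin m) (Fin m) ℂ)ᴴ * partialIdentity i' * Ψ * D).trace.re
  calc _ = ⨆ Φ, f (Φ * u) := iSup_congr fun Φ => by
          rw [trace_conjTranspose_mul_conj_mul_of_mul_mul_conjTranspose_eq hAMA]; rfl
    _ = ⨆ Ψ, f Ψ := (Equiv.mulRight u).iSup_comp
    _ = ∑ k ∈ Iic i', α (Fin.castLE hmn k) ^ 2 :=
        iSup_re_trace_conjTranspose_mul_partialIdentity_mul_mul_diagonal i' hanti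
    _ = ∑ k ∈ Iic i, α k ^ 2 := (Fin.sum_Iic_castLE hmn (fun k => α k ^ 2) i').symm

theorem stmt10
    {m p n : ℕ} (hmn : m ≤ n)
    (A : Matrix (Fin m) (Fin n) ℂ) (B : Matrix (Fin p) (Fin n) ℂ)
    (hrank : (Matrix.fromRows A B).rank = n)
    (U : Matrix (Fin m) (Fin m) ℂ) (hU : U ∈ Matrix.unitaryGroup (Fin m) ℂ)
    (R : Matrix (Fin n) (Fin n) ℂ) (hR : IsUnit R.det)
    (α : Fin n → ℝ)
    (hα0 : ∀ k, 0 ≤ α k) (hα1 : ∀ k, α k ≤ 1) (hmono : Antitone α)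
    (hzero : ∀ k : Fin n, m ≤ (k : ℕ) → α k = 0)
    (hA : A = U * (Matrix.of fun (k : Fin m) (l : Fin n) =>
        if (k : ℕ) = (l : ℕ) then Complex.ofReal (α l) else 0) * R)
    (hBB : Bᴴ * B = Rᴴ * Matrix.diagonal (fun l => Complex.ofReal (1 - α l ^ 2)) * R)
    (i : Fin n) (him : (i : ℕ) < m) :
(⨆ Φ : Matrix.unitaryGroup (Fin m) ℂ,
      (Matrix.trace (Aᴴ * (Φ : Matrix (Fin m) (Fin m) ℂ)ᴴ *
        Matrix.diagonal (fun k : Fin m => if (k : ℕ) ≤ (i : ℕ) then (1 : ℂ) else 0) *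
        (Φ : Matrix (Fin m) (Fin m) ℂ) * A * (Aᴴ * A + Bᴴ * B)⁻¹)).re) =
      ∑ k ∈ Finset.Iic i, α k ^ 2 :=
  stmt10_general hmn A B U hU R hR α hα0 hmono hzero hA hBB i him
end

section
/- Let n ≤ p and let {A,B} be an (m,p,n)-GMP with GSVD as in the context, with generalized singular values (αᵢ, βᵢ). Then for every 1 ≤ i ≤ n, max_{Ξ₁ ∈ 𝕌_p, Ξ₂ ∈ 𝕌_n} |tr(Ξ₁ B (AᴴA + BᴴB)^{-1/2} Ξ₂ ℋ_i)| = βᵢ + β_{i+1} + ⋯ + βₙ. -/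
open Matrix BigOperators
open scoped ComplexOrder

open Finset

/-!
With `W := R S⁻¹`, the relation `Rᴴ R = Aᴴ A + Bᴴ B = S²` makes `W` unitary and
`B S⁻¹ = V Σ_B W`, so after absorbing `V` and `W` into `Ξ₁, Ξ₂` the quantity to maximise is
`|tr (U Σ_B Q ℋ_i)| = |∑ₐ βₐ ∑_{b ≥ i} U_{ba} Q_{ab}|` over unitary `U, Q` (with `U` read on the
bottom `n × n` block). By AM-GM each inner sum is at most
`dₐ = ½ ∑_{b ≥ i} (|U_{ba}|² + |Q_{ab}|²)`, and orthonormality of rows and columns gives `dₐ ≤ 1`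
and `∑ₐ dₐ ≤ n - i + 1`; for increasing `β ≥ 0` such weights satisfy
`∑ₐ βₐ dₐ ≤ βᵢ + ⋯ + βₙ`. Equality holds at `Ξ₁ = Vᴴ`, `Ξ₂ = Wᴴ`.
-/

theorem Finset.sum_mul_le_sum_Ici {ι : Type*} [Fintype ι] [LinearOrder ι]
    [LocallyFiniteOrderTop ι] {β c : ι → ℝ} (i : ι) (hβ : 0 ≤ β i) (hmono : Monotone β)
    (hc0 : ∀ a, 0 ≤ c a) (hc1 : ∀ a, c a ≤ 1) (hcs : ∑ a, c a ≤ #(Ici i)) :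
    ∑ a, β a * c a ≤ ∑ k ∈ Ici i, β k := by
  have htermwise : ∀ a, β a * c a - (if i ≤ a then β a else 0) ≤
      β i * (c a - if i ≤ a then 1 else 0) := by
    intro a
    split_ifs with hia
    · nlinarith [hmono hia, hc1 a]
    · nlinarith [hmono (le_of_not_ge hia), hc0 a]
  have hsum := sum_le_sum fun a (_ : a ∈ univ) => htermwise a
  rw [sum_sub_distrib, ← mul_sum, sum_sub_distrib, ← sum_filter, ← sum_filter, filter_le_eq_Ici,
    sum_const, nsmul_one] at hsum
  nlinarith

namespace Matrix

variable {𝕜 ι κ : Type*} [RCLike 𝕜] [Fintype ι] [DecidableEq ι] {U : Matrix ι ι 𝕜}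

theorem sum_norm_sq_row_of_mem_unitaryGroup (hU : U ∈ unitaryGroup ι 𝕜) (i : ι) :
    ∑ j, ‖U i j‖ ^ 2 = 1 := by
  have h : (U * star U) i i = (1 : Matrix ι ι 𝕜) i i := by rw [mem_unitaryGroup_iff.mp hU]
  simp only [mul_apply, star_apply, RCLike.star_def, RCLike.mul_conj, one_apply_eq] at h
  exact_mod_cast h

theorem sum_norm_sq_col_of_mem_unitaryGroup (hU : U ∈ unitaryGroup ι 𝕜) (j : ι) :
    ∑ i, ‖U i j‖ ^ 2 = 1 := by
  simpa [star_apply] using sum_norm_sq_row_of_mem_unitaryGroup (Unitary.star_mem hU) j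

variable [Fintype κ]

theorem sum_norm_sq_submatrix_row_le (hU : U ∈ unitaryGroup ι 𝕜) (e f : κ ↪ ι) (b : κ) :
    ∑ a, ‖U (e b) (f a)‖ ^ 2 ≤ 1 := by
  rw [← sum_norm_sq_row_of_mem_unitaryGroup hU (e b), ← sum_map univ f fun j => ‖U (e b) j‖ ^ 2]
  exact sum_le_univ_sum_of_nonneg fun _ => sq_nonneg _

theorem sum_norm_sq_submatrix_col_le (hU : U ∈ unitaryGroup ι 𝕜) (e f : κ ↪ ι) (a : κ) :
    ∑ b, ‖U (e b) (f a)‖ ^ 2 ≤ 1 := by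
  rw [← sum_norm_sq_col_of_mem_unitaryGroup hU (f a), ← sum_map univ e fun j => ‖U j (f a)‖ ^ 2]
  exact sum_le_univ_sum_of_nonneg fun _ => sq_nonneg _

end Matrix

theorem norm_sum_mul_sum_Ici_le {𝕜 ι κ : Type*} [RCLike 𝕜] [Fintype ι] [DecidableEq ι]
    [LinearOrder ι] [LocallyFiniteOrderTop ι] [Fintype κ] [DecidableEq κ]
    {U : Matrix κ κ 𝕜} {Q : Matrix ι ι 𝕜} (hU : U ∈ unitaryGroup κ 𝕜) (e : ι ↪ κ)
    (hQ : Q ∈ unitaryGroup ι 𝕜) {β : ι → ℝ} (i : ι) (hβ : ∀ k, 0 ≤ β k) (hmono : Monotone β) :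
    ‖∑ a, (β a : 𝕜) * ∑ b ∈ Ici i, U (e b) (e a) * Q a b‖ ≤ ∑ k ∈ Ici i, β k := by
  set d : ι → ℝ := fun a => ∑ b ∈ Ici i, (‖U (e b) (e a)‖ ^ 2 + ‖Q a b‖ ^ 2) / 2
  have hd0 : ∀ a, 0 ≤ d a := fun a => sum_nonneg fun b _ => by positivity
  have hd1 : ∀ a, d a ≤ 1 := by
    intro a
    have hU' := (sum_le_univ_sum_of_nonneg (s := Ici i) fun b => sq_nonneg ‖U (e b) (e a)‖).trans
      (sum_norm_sq_submatrix_col_le hU e e a)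
    have hQ' := (sum_le_univ_sum_of_nonneg (s := Ici i) fun b => sq_nonneg ‖Q a b‖).trans_eq
      (sum_norm_sq_row_of_mem_unitaryGroup hQ a)
    simp only [d, ← sum_div, sum_add_distrib]
    linarith
  have hds : ∑ a, d a ≤ #(Ici i) := by
    rw [sum_comm, card_eq_sum_ones, Nat.cast_sum]
    refine sum_le_sum fun b _ => ?_
    rw [← sum_div, sum_add_distrib, sum_norm_sq_col_of_mem_unitaryGroup hQ b]
    linarith [sum_norm_sq_submatrix_row_le hU e e b]
  have hcd : ∀ a, ‖∑ b ∈ Ici i, U (e b) (e a) * Q a b‖ ≤ d a := fun a =>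
    (norm_sum_le _ _).trans <| sum_le_sum fun b _ => by
      rw [norm_mul]; linarith [two_mul_le_add_sq ‖U (e b) (e a)‖ ‖Q a b‖]
  calc ‖∑ a, (β a : 𝕜) * ∑ b ∈ Ici i, U (e b) (e a) * Q a b‖
      ≤ ∑ a, β a * ‖∑ b ∈ Ici i, U (e b) (e a) * Q a b‖ := by
        refine (norm_sum_le _ _).trans_eq (sum_congr rfl fun a _ => ?_)
        rw [norm_mul, RCLike.norm_of_nonneg (hβ a)]
    _ ≤ ∑ a, β a * d a := sum_le_sum fun a _ => mul_le_mul_of_nonneg_left (hcd a) (hβ a)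
    _ ≤ ∑ k ∈ Ici i, β k := sum_mul_le_sum_Ici i (hβ i) hmono hd0 hd1 hds

theorem Matrix.mul_inv_mem_unitaryGroup_of_conjTranspose_mul_self_eq {𝕜 ι : Type*} [CommRing 𝕜]
    [StarRing 𝕜] [Fintype ι] [DecidableEq ι] {R S : Matrix ι ι 𝕜} (hS : S.IsHermitian)
    (hSdet : IsUnit S.det) (h : Rᴴ * R = S * S) : R * S⁻¹ ∈ unitaryGroup ι 𝕜 := by
  rw [mem_unitaryGroup_iff', star_eq_conjTranspose, conjTranspose_mul, conjTranspose_nonsing_inv,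
    hS.eq]
  calc S⁻¹ * Rᴴ * (R * S⁻¹) = S⁻¹ * (Rᴴ * R) * S⁻¹ := by simp only [Matrix.mul_assoc]
    _ = (S⁻¹ * S) * (S * S⁻¹) := by rw [h]; simp only [Matrix.mul_assoc]
    _ = 1 := by rw [nonsing_inv_mul S hSdet, mul_nonsing_inv S hSdet, Matrix.one_mul]

theorem ciSup_ciSup_eq_of_forall_le_of_eq {α β γ : Type*} [ConditionallyCompleteLattice γ]
    {f : α → β → γ} {c : γ} (h : ∀ x y, f x y ≤ c) (x₀ : α) (y₀ : β) (h₀ : f x₀ y₀ = c) :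
    ⨆ x, ⨆ y, f x y = c := by
  have : Nonempty α := ⟨x₀⟩
  have : Nonempty β := ⟨y₀⟩
  have hinner : ∀ x, ⨆ y, f x y ≤ c := fun x => ciSup_le (h x)
  refine le_antisymm (ciSup_le hinner) ?_
  calc c = f x₀ y₀ := h₀.symm
    _ ≤ ⨆ y, f x₀ y := le_ciSup ⟨c, by rintro _ ⟨y, rfl⟩; exact h x₀ y⟩ y₀
    _ ≤ ⨆ x, ⨆ y, f x y := le_ciSup ⟨c, by rintro _ ⟨x, rfl⟩; exact hinner x⟩ x₀

section GSVD

variable {n p : ℕ}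

/-- The matrix `Σ_B` of the GSVD: a `(p - n) × n` zero block on top of `diag β`. -/
def gsvdSigma (p : ℕ) (β : Fin n → ℝ) : Matrix (Fin p) (Fin n) ℂ :=
  of fun k l => if (k : ℕ) + n = p + (l : ℕ) then Complex.ofReal (β l) else 0

/-- The matrix `ℋ_i = (0, diag (0, …, 0, 1, …, 1))`, with ones from row `i` on. -/
def gsvdSelector (p : ℕ) (i : Fin n) : Matrix (Fin n) (Fin p) ℂ :=
  of fun k l => if (l : ℕ) + n = p + (k : ℕ) ∧ (i : ℕ) ≤ (k : ℕ) then 1 else 0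

def bottomEmb (hnp : n ≤ p) : Fin n ↪ Fin p where
  toFun a := ⟨p - n + a, by omega⟩
  inj' a b h := Fin.ext (by simpa using congrArg Fin.val h)

theorem val_bottomEmb (hnp : n ≤ p) (a : Fin n) : (bottomEmb hnp a : ℕ) = p - n + a := rfl

theorem eq_bottomEmb_iff (hnp : n ≤ p) (k : Fin p) (l : Fin n) :
    k = bottomEmb hnp l ↔ (k : ℕ) + n = p + l := by
  rw [Fin.ext_iff, val_bottomEmb]
  omega

theorem mul_gsvdSigma_apply {κ : Type*} (hnp : n ≤ p) (β : Fin n → ℝ) (M : Matrix κ (Fin p) ℂ)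
    (r : κ) (a : Fin n) : (M * gsvdSigma p β) r a = M r (bottomEmb hnp a) * β a := by
  simp [gsvdSigma, mul_apply, ← eq_bottomEmb_iff hnp]

theorem trace_mul_gsvdSelector (hnp : n ≤ p) (i : Fin n) (M : Matrix (Fin p) (Fin n) ℂ) :
    trace (M * gsvdSelector p i) = ∑ b ∈ Ici i, M (bottomEmb hnp b) b := by
  rw [trace_mul_comm, ← filter_le_eq_Ici, sum_filter]
  simp only [Matrix.trace, Matrix.diag, mul_apply, gsvdSelector, of_apply, ← eq_bottomEmb_iff hnp,
    ← Fin.le_def, ite_and]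
  simp

theorem gsvdSigma_conjTranspose_mul_self (hnp : n ≤ p) (β : Fin n → ℝ) :
    (gsvdSigma p β)ᴴ * gsvdSigma p β = diagonal fun l => (β l : ℂ) ^ 2 := by
  ext a b
  rw [mul_gsvdSigma_apply hnp, conjTranspose_apply, diagonal_apply]
  by_cases hab : a = b
  · subst hab
    simp [gsvdSigma, ← eq_bottomEmb_iff hnp, sq]
  · simp [gsvdSigma, ← eq_bottomEmb_iff hnp, hab, Ne.symm hab]

theorem trace_mul_gsvdSigma_mul_mul_gsvdSelector (hnp : n ≤ p) (β : Fin n → ℝ) (i : Fin n)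
    (U : Matrix (Fin p) (Fin p) ℂ) (Q : Matrix (Fin n) (Fin n) ℂ) :
    trace (U * gsvdSigma p β * Q * gsvdSelector p i) =
      ∑ a, (β a : ℂ) * ∑ b ∈ Ici i, U (bottomEmb hnp b) (bottomEmb hnp a) * Q a b := by
  simp only [trace_mul_gsvdSelector hnp, mul_apply (M := U * gsvdSigma p β),
    mul_gsvdSigma_apply hnp, mul_sum]
  rw [sum_comm]
  exact sum_congr rfl fun b _ => sum_congr rfl fun a _ => by ring

theorem norm_trace_mul_gsvdSigma_mul_mul_gsvdSelector_le (hnp : n ≤ p) {β : Fin n → ℝ}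
    (i : Fin n) (hβ : ∀ k, 0 ≤ β k) (hmono : Monotone β) {U : Matrix (Fin p) (Fin p) ℂ}
    {Q : Matrix (Fin n) (Fin n) ℂ} (hU : U ∈ unitaryGroup (Fin p) ℂ)
    (hQ : Q ∈ unitaryGroup (Fin n) ℂ) :
    ‖trace (U * gsvdSigma p β * Q * gsvdSelector p i)‖ ≤ ∑ k ∈ Ici i, β k := by
  rw [trace_mul_gsvdSigma_mul_mul_gsvdSelector hnp]
  exact norm_sum_mul_sum_Ici_le hU (bottomEmb hnp) hQ i hβ hmono

theorem trace_gsvdSigma_mul_gsvdSelector (hnp : n ≤ p) (β : Fin n → ℝ) (i : Fin n) :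
    trace (gsvdSigma p β * gsvdSelector p i) = ∑ k ∈ Ici i, (β k : ℂ) := by
  rw [trace_mul_gsvdSelector hnp]
  refine sum_congr rfl fun b _ => ?_
  simp [gsvdSigma, ← eq_bottomEmb_iff hnp]

theorem conjTranspose_mul_self_add_eq_of_gsvd {m : ℕ} (hnp : n ≤ p)
    {A : Matrix (Fin m) (Fin n) ℂ} {B : Matrix (Fin p) (Fin n) ℂ} {V : Matrix (Fin p) (Fin p) ℂ}
    (hV : V ∈ unitaryGroup (Fin p) ℂ) {R : Matrix (Fin n) (Fin n) ℂ} {β : Fin n → ℝ}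
    (hB : B = V * gsvdSigma p β * R)
    (hAA : Aᴴ * A = Rᴴ * diagonal (fun l => ((1 - β l ^ 2 : ℝ) : ℂ)) * R) :
    Aᴴ * A + Bᴴ * B = Rᴴ * R := by
  have hBB : Bᴴ * B = Rᴴ * diagonal (fun l => (β l : ℂ) ^ 2) * R := by
    rw [hB, conjTranspose_mul, conjTranspose_mul, ← gsvdSigma_conjTranspose_mul_self hnp]
    calc Rᴴ * ((gsvdSigma p β)ᴴ * Vᴴ) * (V * gsvdSigma p β * R)
        = Rᴴ * (gsvdSigma p β)ᴴ * (Vᴴ * V) * gsvdSigma p β * R := by simp only [Matrix.mul_assoc]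
      _ = _ := by
        rw [show Vᴴ * V = 1 from mem_unitaryGroup_iff'.mp hV, Matrix.mul_one,
          Matrix.mul_assoc _ _ (gsvdSigma p β)]
  have hsum : (fun l => ((1 - β l ^ 2 : ℝ) : ℂ) + (β l : ℂ) ^ 2) = fun _ => 1 := by
    funext l
    push_cast
    ring
  rw [hAA, hBB, ← Matrix.add_mul, ← Matrix.mul_add, diagonal_add, hsum, diagonal_one,
    Matrix.mul_one]

end GSVD

theorem stmt13_general
    {m p n : ℕ} (hnp : n ≤ p)
    (A : Matrix (Fin m) (Fin n) ℂ) (B : Matrix (Fin p) (Fin n) ℂ)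
    (V : Matrix (Fin p) (Fin p) ℂ) (hV : V ∈ Matrix.unitaryGroup (Fin p) ℂ)
    (R : Matrix (Fin n) (Fin n) ℂ)
    (β : Fin n → ℝ)
    (hβ0 : ∀ k, 0 ≤ β k) (hmono : Monotone β)
    (hB : B = V * (Matrix.of fun (k : Fin p) (l : Fin n) =>
        if (k : ℕ) + n = p + (l : ℕ) then Complex.ofReal (β l) else 0) * R)
    (hAA : Aᴴ * A = Rᴴ * Matrix.diagonal (fun l => Complex.ofReal (1 - β l ^ 2)) * R)
    (S : Matrix (Fin n) (Fin n) ℂ) (hS : S.PosDef)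
    (hSsq : S * S = Aᴴ * A + Bᴴ * B)
    (i : Fin n) :
(⨆ X1 : Matrix.unitaryGroup (Fin p) ℂ, ⨆ X2 : Matrix.unitaryGroup (Fin n) ℂ,
      ‖(Matrix.trace ((X1 : Matrix (Fin p) (Fin p) ℂ) * B * S⁻¹ *
        (X2 : Matrix (Fin n) (Fin n) ℂ) *
        Matrix.of (fun (k : Fin n) (l : Fin p) =>
          if (l : ℕ) + n = p + (k : ℕ) ∧ (i : ℕ) ≤ (k : ℕ) then (1 : ℂ) else 0)))‖) =
      ∑ k ∈ Finset.Ici i, β k := by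
  have hSdet : IsUnit S.det := isUnit_iff_ne_zero.mpr hS.det_pos.ne'
  have hRR : Rᴴ * R = S * S := by
    rw [hSsq, conjTranspose_mul_self_add_eq_of_gsvd hnp hV hB hAA]
  have hW := mul_inv_mem_unitaryGroup_of_conjTranspose_mul_self_eq hS.isHermitian hSdet hRR
  have hfactor : ∀ (X₁ : Matrix (Fin p) (Fin p) ℂ) (X₂ : Matrix (Fin n) (Fin n) ℂ),
      X₁ * B * S⁻¹ * X₂ = X₁ * V * gsvdSigma p β * (R * S⁻¹ * X₂) := by
    intro X₁ X₂
    rw [show B = V * gsvdSigma p β * R from hB]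
    simp only [Matrix.mul_assoc]
  refine ciSup_ciSup_eq_of_forall_le_of_eq (fun X₁ X₂ => ?_)
    (⟨star V, Unitary.star_mem hV⟩ : unitaryGroup (Fin p) ℂ)
    (⟨star (R * S⁻¹), Unitary.star_mem hW⟩ : unitaryGroup (Fin n) ℂ) ?_
  · rw [hfactor]
    exact norm_trace_mul_gsvdSigma_mul_mul_gsvdSelector_le hnp i hβ0 hmono (mul_mem X₁.2 hV)
      (mul_mem hW X₂.2)
  · rw [hfactor, Unitary.star_mul_self_of_mem hV, Unitary.mul_star_self_of_mem hW, Matrix.one_mul,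
      Matrix.mul_one]
    refine (congrArg norm (trace_gsvdSigma_mul_gsvdSelector hnp β i)).trans ?_
    rw [← Complex.ofReal_sum, Complex.norm_real, Real.norm_of_nonneg (sum_nonneg fun k _ => hβ0 k)]

theorem stmt13
    {m p n : ℕ} (hnp : n ≤ p)
    (A : Matrix (Fin m) (Fin n) ℂ) (B : Matrix (Fin p) (Fin n) ℂ)
    (hrank : (Matrix.fromRows A B).rank = n)
    (V : Matrix (Fin p) (Fin p) ℂ) (hV : V ∈ Matrix.unitaryGroup (Fin p) ℂ)
    (R : Matrix (Fin n) (Fin n) ℂ) (hR : IsUnit R.det)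
    (β : Fin n → ℝ)
    (hβ0 : ∀ k, 0 ≤ β k) (hβ1 : ∀ k, β k ≤ 1) (hmono : Monotone β)
    (hB : B = V * (Matrix.of fun (k : Fin p) (l : Fin n) =>
        if (k : ℕ) + n = p + (l : ℕ) then Complex.ofReal (β l) else 0) * R)
    (hAA : Aᴴ * A = Rᴴ * Matrix.diagonal (fun l => Complex.ofReal (1 - β l ^ 2)) * R)
    (S : Matrix (Fin n) (Fin n) ℂ) (hS : S.PosDef)
    (hSsq : S * S = Aᴴ * A + Bᴴ * B)
    (i : Fin n) :
(⨆ X1 : Matrix.unitaryGroup (Fin p) ℂ, ⨆ X2 : Matrix.unitaryGroup (Fin n) ℂ,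
      ‖(Matrix.trace ((X1 : Matrix (Fin p) (Fin p) ℂ) * B * S⁻¹ *
        (X2 : Matrix (Fin n) (Fin n) ℂ) *
        Matrix.of (fun (k : Fin n) (l : Fin p) =>
          if (l : ℕ) + n = p + (k : ℕ) ∧ (i : ℕ) ≤ (k : ℕ) then (1 : ℂ) else 0)))‖) =
      ∑ k ∈ Finset.Ici i, β k :=
  stmt13_general hnp A B V hV R β hβ0 hmono hB hAA S hS hSsq i
end

section
/- Let m < n and let {A,B} be an (m,p,n)-GMP with GSVD as in the context, with generalized singular values (αᵢ, βᵢ). If m < ⌊n/2⌋, then for every 1 ≤ i ≤ m both formulations hold: αᵢ² = max_{Ψ ∈ 𝕌_m} Re tr(Aᴴ Ψᴴ 𝒬_i Ψ A (AᴴA + BᴴB)^{-1}) − max_{Ψ ∈ 𝕌_m} Re tr(Aᴴ Ψᴴ 𝒬_{i-1} Ψ A (AᴴA + BᴴB)^{-1}) and αᵢ = max_{Π₃ ∈ 𝕌_n, Π₄ ∈ 𝕌_m} |tr(Π₃ (AᴴA + BᴴB)^{-1/2} Aᴴ Π₄ 𝒮_i)| − max_{Π₃ ∈ 𝕌_n,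 Π₄ ∈ 𝕌_m} |tr(Π₃ (AᴴA + BᴴB)^{-1/2} Aᴴ Π₄ 𝒮_{i-1})|, and moreover α_{m+1} = ⋯ = α_{⌊n/2⌋} = 0. If instead ⌊n/2⌋ ≤ m, then the same two formulations hold for every 1 ≤ i ≤ ⌊n/2⌋. -/
/-!
Write `A = U Σ R` with `AᴴA + BᴴB = RᴴR`. Substituting `Ψ = Φ U`, resp. `P = Π₃ S⁻¹ Rᴴ` (unitary
because `RᴴR = S²`) and `Q = Uᴴ Π₄`, both objective functions take the form
`|tr (𝒬_t X D Y)| = |∑_{k<t} ∑_j X_kj d_j Y_jk|`, where every row and column of `X` and `Y` has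
norm at most one and `D = diag d` is `diag (α²)`, resp. `diag α`. By AM-GM the weights
`w_j = ∑_{k<t} |X_kj| |Y_jk|` lie in `[0, 1]` and add up to at most `t`, so for decreasing `d`
the value is at most `d₁ + ⋯ + d_t`, which the identity attains. Both maxima are therefore the
partial sums `∑_{j<t} α_j²` and `∑_{j<t} α_j`, and `αᵢ²`, `αᵢ` are their consecutive differences.
-/

open Matrix Finset
open scoped ComplexOrder

section Majorization

variable {m : ℕ}

lemma sum_mul_le_sum_filter_lt {a w : Fin m → ℝ} (ha0 : ∀ j, 0 ≤ a j) (ha : Antitone a)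
    (hw0 : ∀ j, 0 ≤ w j) (hw1 : ∀ j, w j ≤ 1) {t : ℕ} (ht : t ≤ m) (hsum : ∑ j, w j ≤ t) :
    ∑ j, w j * a j ≤ ∑ j : Fin m with j.val < t, a j := by
  rcases t.eq_zero_or_pos with rfl | htpos
  · have hw : ∀ j ∈ univ, w j = 0 := (sum_eq_zero_iff_of_nonneg fun j _ => hw0 j).1
      (le_antisymm (by simpa using hsum) (sum_nonneg fun j _ => hw0 j))
    simp [hw]
  -- `θ` separates the `t` largest values of `a` from the others
  set θ := a ⟨t - 1, by omega⟩
  have hterm : ∀ j, w j * a j ≤ (if (j : ℕ) < t then a j - θ else 0) + w j * θ := by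
    intro j
    split_ifs with hj
    · have : θ ≤ a j := ha (Fin.le_def.2 (by simp; omega))
      nlinarith [hw1 j]
    · have : a j ≤ θ := ha (Fin.le_def.2 (by simp; omega))
      nlinarith [hw0 j]
  calc ∑ j, w j * a j
      ≤ ∑ j : Fin m, ((if (j : ℕ) < t then a j - θ else 0) + w j * θ) :=
        sum_le_sum fun j _ => hterm j
    _ = ∑ j : Fin m with j.val < t, (a j - θ) + (∑ j, w j) * θ := by
      rw [sum_add_distrib, sum_filter, sum_mul]
    _ ≤ ∑ j : Fin m with j.val < t, (a j - θ) + t * θ := by gcongr; exact ha0 _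
    _ = ∑ j : Fin m with j.val < t, a j := by
      rw [sum_sub_distrib, sum_const, Fin.card_filter_val_lt, min_eq_right ht, nsmul_eq_mul]
      ring

lemma sum_filter_lt_succ {M : Type*} [AddCommMonoid M] (f : Fin m → M) {i : ℕ} (hi : i < m) :
    ∑ j : Fin m with j.val < i + 1, f j = ∑ j : Fin m with j.val < i, f j + f ⟨i, hi⟩ := by
  have hfilter : ({j | j.val < i + 1} : Finset (Fin m)) =
      insert ⟨i, hi⟩ ({j | j.val < i} : Finset (Fin m)) := by
    ext j
    simp [Fin.ext_iff]
    omega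
  rw [hfilter, sum_insert (by simp), add_comm]

end Majorization

lemma sum_mul_le_one_of_sum_sq_le_one {ι : Type*} [Fintype ι] {f g : ι → ℝ}
    (hf : ∑ i, f i ^ 2 ≤ 1) (hg : ∑ i, g i ^ 2 ≤ 1) : ∑ i, f i * g i ≤ 1 := by
  have h := sum_le_sum fun i (_ : i ∈ univ) => two_mul_le_add_sq (f i) (g i)
  simp only [sum_add_distrib, mul_assoc, ← mul_sum] at h
  linarith

lemma Fintype.sum_comp_le_of_injective {ι κ : Type*} [Fintype ι] [Fintype κ] {g : ι → κ}
    (hg : g.Injective) {f : κ → ℝ} (hf : ∀ k, 0 ≤ f k) : ∑ i, f (g i) ≤ ∑ k, f k := by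
  simpa using sum_le_sum_of_subset_of_nonneg (subset_univ (univ.map ⟨g, hg⟩)) fun k _ _ => hf k

lemma iSup_comp_mul_right {G ι : Type*} [Group G] [SupSet ι] (f : G → ι) (u : G) :
    ⨆ x, f (x * u) = ⨆ x, f x :=
  (Equiv.mulRight u).iSup_comp

lemma iSup_comp_mul_left {G ι : Type*} [Group G] [SupSet ι] (f : G → ι) (u : G) :
    ⨆ x, f (u * x) = ⨆ x, f x :=
  (Equiv.mulLeft u).iSup_comp

section RowsCols

variable {ι κ : Type*} [Fintype ι] [Fintype κ]

def RowsColsNormLeOne (X : Matrix ι κ ℂ) : Prop :=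
  (∀ i, ∑ j, ‖X i j‖ ^ 2 ≤ 1) ∧ ∀ j, ∑ i, ‖X i j‖ ^ 2 ≤ 1

lemma sum_norm_sq_row_eq_one_of_mem_unitaryGroup [DecidableEq ι] {U : Matrix ι ι ℂ}
    (hU : U ∈ unitaryGroup ι ℂ) (i : ι) : ∑ j, ‖U i j‖ ^ 2 = 1 := by
  have h := congrFun (congrFun (mem_unitaryGroup_iff.1 hU) i) i
  simp only [mul_apply, star_apply, Complex.star_def, Complex.mul_conj', one_apply_eq] at h
  exact_mod_cast h

lemma RowsColsNormLeOne.of_mem_unitaryGroup [DecidableEq ι] {U : Matrix ι ι ℂ}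
    (hU : U ∈ unitaryGroup ι ℂ) : RowsColsNormLeOne U := by
  refine ⟨fun i => (sum_norm_sq_row_eq_one_of_mem_unitaryGroup hU i).le, fun j => ?_⟩
  simpa using (sum_norm_sq_row_eq_one_of_mem_unitaryGroup (Unitary.star_mem hU) j).le

lemma RowsColsNormLeOne.conjTranspose {X : Matrix ι κ ℂ} (hX : RowsColsNormLeOne X) :
    RowsColsNormLeOne Xᴴ := by
  simpa [RowsColsNormLeOne, and_comm] using hX

lemma RowsColsNormLeOne.submatrix {ι' κ' : Type*} [Fintype ι'] [Fintype κ']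
    {X : Matrix ι κ ℂ} (hX : RowsColsNormLeOne X) {f : ι' → ι} {g : κ' → κ}
    (hf : f.Injective) (hg : g.Injective) : RowsColsNormLeOne (X.submatrix f g) :=
  ⟨fun i => (Fintype.sum_comp_le_of_injective hg fun _ => by positivity).trans (hX.1 (f i)),
    fun j => (Fintype.sum_comp_le_of_injective hf fun _ => by positivity).trans (hX.2 (g j))⟩

end RowsCols

section LeadingProj

variable {m : ℕ}

-- the paper's `𝒬_t`
abbrev leadingProj (m t : ℕ) : Matrix (Fin m) (Fin m) ℂ :=
  diagonal fun k => if (k : ℕ) < t then 1 else 0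

lemma trace_leadingProj_mul_diagonal_mul (t : ℕ) (X Y : Matrix (Fin m) (Fin m) ℂ)
    (a : Fin m → ℂ) :
    trace (leadingProj m t * X * diagonal a * Y) =
      ∑ k : Fin m with k.val < t, ∑ j, X k j * a j * Y j k := by
  simp [trace, mul_apply, diagonal, sum_filter, ite_mul]

lemma trace_leadingProj_mul_diagonal (t : ℕ) (a : Fin m → ℝ) :
    trace (leadingProj m t * diagonal (fun j => (a j : ℂ))) =
      ((∑ j : Fin m with j.val < t, a j : ℝ) : ℂ) := by
  simp [leadingProj, sum_filter, apply_ite]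

lemma norm_trace_leadingProj_mul_diagonal_mul_le {a : Fin m → ℝ} (ha0 : ∀ j, 0 ≤ a j)
    (ha : Antitone a) {t : ℕ} (ht : t ≤ m) {X Y : Matrix (Fin m) (Fin m) ℂ}
    (hX : RowsColsNormLeOne X) (hY : RowsColsNormLeOne Y) :
    ‖trace (leadingProj m t * X * diagonal (fun j => (a j : ℂ)) * Y)‖ ≤
      ∑ j : Fin m with j.val < t, a j := by
  set w : Fin m → ℝ := fun j => ∑ k : Fin m with k.val < t, ‖X k j‖ * ‖Y j k‖
  have hw0 : ∀ j, 0 ≤ w j := fun j => sum_nonneg fun k _ => by positivity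
  have hw1 : ∀ j, w j ≤ 1 := fun j =>
    (sum_le_univ_sum_of_nonneg fun k => by positivity).trans
      (sum_mul_le_one_of_sum_sq_le_one (hX.2 j) (hY.1 j))
  have hsum : ∑ j, w j ≤ t :=
    calc ∑ j, w j = ∑ k : Fin m with k.val < t, ∑ j, ‖X k j‖ * ‖Y j k‖ :=
          sum_comm' fun _ _ => Iff.rfl
      _ ≤ ∑ k : Fin m with k.val < t, 1 :=
          sum_le_sum fun k _ => sum_mul_le_one_of_sum_sq_le_one (hX.1 k) (hY.2 k)
      _ = t := by simp [Fin.card_filter_val_lt, ht]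
  calc ‖trace (leadingProj m t * X * diagonal (fun j => (a j : ℂ)) * Y)‖
      ≤ ∑ k : Fin m with k.val < t, ∑ j, ‖X k j‖ * a j * ‖Y j k‖ := by
        rw [trace_leadingProj_mul_diagonal_mul]
        refine (norm_sum_le _ _).trans (sum_le_sum fun k _ => (norm_sum_le _ _).trans_eq ?_)
        simp [abs_of_nonneg (ha0 _)]
    _ = ∑ j, w j * a j := by
        rw [sum_comm]
        simp only [w, sum_mul]
        exact sum_congr rfl fun j _ => sum_congr rfl fun k _ => by ring
    _ ≤ ∑ j : Fin m with j.val < t, a j := sum_mul_le_sum_filter_lt ha0 ha hw0 hw1 ht hsum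

variable {a : Fin m → ℝ} {t : ℕ}

lemma iSup_re_trace_leadingProj_conj (ha0 : ∀ j, 0 ≤ a j) (ha : Antitone a) (ht : t ≤ m) :
    ⨆ Ψ : unitaryGroup (Fin m) ℂ,
      (trace (leadingProj m t * (Ψ : Matrix (Fin m) (Fin m) ℂ) * diagonal (fun j => (a j : ℂ)) *
        (Ψ : Matrix (Fin m) (Fin m) ℂ)ᴴ)).re =
      ∑ j : Fin m with j.val < t, a j := by
  refine ciSup_eq_of_forall_le_of_forall_lt_exists_gt (fun Ψ => ?_) fun w hw => ⟨1, ?_⟩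
  · have hΨ := RowsColsNormLeOne.of_mem_unitaryGroup Ψ.2
    exact (Complex.re_le_norm _).trans
      (norm_trace_leadingProj_mul_diagonal_mul_le ha0 ha ht hΨ hΨ.conjTranspose)
  · simpa only [OneMemClass.coe_one, conjTranspose_one, mul_one, trace_leadingProj_mul_diagonal,
      Complex.ofReal_re] using hw

lemma iSup_norm_trace_leadingProj_submatrix {n : ℕ} (hmn : m ≤ n) (ha0 : ∀ j, 0 ≤ a j)
    (ha : Antitone a) (ht : t ≤ m) :
    ⨆ P : unitaryGroup (Fin n) ℂ, ⨆ Q : unitaryGroup (Fin m) ℂ,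
      ‖trace (leadingProj m t *
        (P : Matrix (Fin n) (Fin n) ℂ).submatrix (Fin.castLE hmn) (Fin.castLE hmn) *
        diagonal (fun j => (a j : ℂ)) * (Q : Matrix (Fin m) (Fin m) ℂ))‖ =
      ∑ j : Fin m with j.val < t, a j := by
  have hle : ∀ (P : unitaryGroup (Fin n) ℂ) (Q : unitaryGroup (Fin m) ℂ),
      ‖trace (leadingProj m t *
        (P : Matrix (Fin n) (Fin n) ℂ).submatrix (Fin.castLE hmn) (Fin.castLE hmn) *
        diagonal (fun j => (a j : ℂ)) * (Q : Matrix (Fin m) (Fin m) ℂ))‖ ≤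
      ∑ j : Fin m with j.val < t, a j := fun P Q =>
    norm_trace_leadingProj_mul_diagonal_mul_le ha0 ha ht
      ((RowsColsNormLeOne.of_mem_unitaryGroup P.2).submatrix (Fin.castLE_injective hmn)
        (Fin.castLE_injective hmn))
      (RowsColsNormLeOne.of_mem_unitaryGroup Q.2)
  refine ciSup_eq_of_forall_le_of_forall_lt_exists_gt (fun P => ciSup_le (hle P))
    fun w hw => ⟨1, hw.trans_le (le_ciSup_of_le ⟨_, Set.forall_mem_range.2 (hle 1)⟩ 1 ?_)⟩
  rw [OneMemClass.coe_one, OneMemClass.coe_one, submatrix_one _ (Fin.castLE_injective hmn),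
    mul_one, mul_one, trace_leadingProj_mul_diagonal, Complex.norm_real,
    Real.norm_of_nonneg (sum_nonneg fun j _ => ha0 j)]

end LeadingProj

section MatrixIdentities

variable {ι κ K : Type*} [Fintype κ] [DecidableEq κ]

lemma trace_conjTranspose_mul_mul_mul_inv [Fintype ι] [CommRing K] [StarRing K]
    {R : Matrix κ κ K} (hR : IsUnit R.det) (W : Matrix ι κ K) (X : Matrix ι ι K) :
    trace ((W * R)ᴴ * X * (W * R) * (Rᴴ * R)⁻¹) = trace (X * W * Wᴴ) := by
  have hRH : IsUnit Rᴴ.det := by rwa [det_conjTranspose, isUnit_star]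
  rw [Matrix.mul_inv_rev, conjTranspose_mul]
  calc trace (Rᴴ * Wᴴ * X * (W * R) * (R⁻¹ * Rᴴ⁻¹))
      = trace (Rᴴ * (Wᴴ * X * W) * Rᴴ⁻¹) := by
        simp only [Matrix.mul_assoc, mul_nonsing_inv_cancel_left _ _ hR]
    _ = trace (X * W * Wᴴ) := by
        rw [trace_mul_cycle, nonsing_inv_mul _ hRH, one_mul, trace_mul_cycle, trace_mul_cycle]

lemma one_submatrix_mul_mul_conjTranspose [Semiring K] [StarRing K] (f : ι → κ)
    (P : Matrix κ κ K) :
    (1 : Matrix κ κ K).submatrix f id * P * ((1 : Matrix κ κ K).submatrix f id)ᴴ =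
      P.submatrix f f := by
  ext i j
  simp [mul_apply, one_apply]

lemma inv_mul_conjTranspose_mem_unitaryGroup [CommRing K] [StarRing K] {S R : Matrix κ κ K}
    (hS : S.IsHermitian) (hSdet : IsUnit S.det) (hRS : Rᴴ * R = S * S) :
    S⁻¹ * Rᴴ ∈ unitaryGroup κ K := by
  rw [mem_unitaryGroup_iff, star_eq_conjTranspose, conjTranspose_mul, conjTranspose_conjTranspose,
    conjTranspose_nonsing_inv, hS.eq]
  calc S⁻¹ * Rᴴ * (R * S⁻¹) = S⁻¹ * (Rᴴ * R) * S⁻¹ := by simp only [Matrix.mul_assoc]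
    _ = 1 := by
      rw [hRS, ← Matrix.mul_assoc, nonsing_inv_mul _ hSdet, Matrix.one_mul,
        mul_nonsing_inv _ hSdet]

end MatrixIdentities

section RectangularDiagonal

variable {m n : ℕ}

lemma of_ite_eq_diagonal_mul_submatrix_one (hmn : m ≤ n) (d : Fin n → ℂ) :
    (of fun (k : Fin m) (l : Fin n) => if (k : ℕ) = (l : ℕ) then d l else 0) =
      diagonal (fun k => d (Fin.castLE hmn k)) *
        (1 : Matrix (Fin n) (Fin n) ℂ).submatrix (Fin.castLE hmn) id := by
  ext k l
  by_cases h : (k : ℕ) = l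
  · obtain rfl : Fin.castLE hmn k = l := Fin.ext h
    simp [one_apply]
  · simp [h, one_apply, Fin.ext_iff]

lemma of_ite_and_lt_eq_leadingProj_mul (hmn : m ≤ n) (t : ℕ) :
    (of fun (k : Fin m) (l : Fin n) => if (k : ℕ) = (l : ℕ) ∧ (k : ℕ) < t then (1 : ℂ) else 0) =
      leadingProj m t * (1 : Matrix (Fin n) (Fin n) ℂ).submatrix (Fin.castLE hmn) id := by
  ext k l
  simp [one_apply, Fin.ext_iff, eq_comm, ite_and]

lemma of_ite_mul_conjTranspose (hmn : m ≤ n) (α : Fin n → ℝ) :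
    (of fun (k : Fin m) (l : Fin n) => if (k : ℕ) = (l : ℕ) then (α l : ℂ) else 0) *
      (of fun (k : Fin m) (l : Fin n) => if (k : ℕ) = (l : ℕ) then (α l : ℂ) else 0)ᴴ =
      diagonal (fun k => ((α (Fin.castLE hmn k) ^ 2 : ℝ) : ℂ)) := by
  have hJ : (1 : Matrix (Fin n) (Fin n) ℂ).submatrix (Fin.castLE hmn) id *
      ((1 : Matrix (Fin n) (Fin n) ℂ).submatrix (Fin.castLE hmn) id)ᴴ = 1 := by
    simpa [submatrix_one _ (Fin.castLE_injective hmn)] using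
      one_submatrix_mul_mul_conjTranspose (Fin.castLE hmn) (1 : Matrix (Fin n) (Fin n) ℂ)
  rw [of_ite_eq_diagonal_mul_submatrix_one hmn, conjTranspose_mul, Matrix.mul_assoc,
    ← Matrix.mul_assoc (submatrix _ _ _), hJ, Matrix.one_mul, diagonal_conjTranspose,
    diagonal_mul_diagonal]
  simp [sq]

lemma conjTranspose_of_ite_mul {α : Fin n → ℝ} (hzero : ∀ k : Fin n, m ≤ (k : ℕ) → α k = 0) :
    (of fun (k : Fin m) (l : Fin n) => if (k : ℕ) = (l : ℕ) then (α l : ℂ) else 0)ᴴ *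
      (of fun (k : Fin m) (l : Fin n) => if (k : ℕ) = (l : ℕ) then (α l : ℂ) else 0) =
      diagonal (fun l => ((α l ^ 2 : ℝ) : ℂ)) := by
  ext l l'
  by_cases hl : (l : ℕ) < m
  · rw [mul_apply, sum_eq_single ⟨l, hl⟩]
    · by_cases h : l = l' <;> simp [Fin.val_inj, sq, h]
    · intro k _ hk
      simp [Fin.ext_iff] at hk ⊢
      simp [hk]
    · simp
  · simp [mul_apply, hzero l (not_lt.1 hl), diagonal_apply]

lemma conjTranspose_mul_add_eq_of_gsvd {p : ℕ} {α : Fin n → ℝ}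
    (hzero : ∀ k : Fin n, m ≤ (k : ℕ) → α k = 0) {U : Matrix (Fin m) (Fin m) ℂ}
    (hU : U ∈ unitaryGroup (Fin m) ℂ) {R : Matrix (Fin n) (Fin n) ℂ}
    {A : Matrix (Fin m) (Fin n) ℂ} {B : Matrix (Fin p) (Fin n) ℂ}
    (hA : A = U * (of fun (k : Fin m) (l : Fin n) =>
      if (k : ℕ) = (l : ℕ) then (α l : ℂ) else 0) * R)
    (hBB : Bᴴ * B = Rᴴ * diagonal (fun l => ((1 - α l ^ 2 : ℝ) : ℂ)) * R) :
    Aᴴ * A + Bᴴ * B = Rᴴ * R := by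
  set SigmaA := of fun (k : Fin m) (l : Fin n) => if (k : ℕ) = (l : ℕ) then (α l : ℂ) else 0
  have hUU : Uᴴ * U = 1 := mem_unitaryGroup_iff'.1 hU
  rw [hBB, hA]
  calc _ = Rᴴ * (SigmaAᴴ * (Uᴴ * U) * SigmaA +
        diagonal (fun l => ((1 - α l ^ 2 : ℝ) : ℂ))) * R := by
        simp only [conjTranspose_mul, Matrix.mul_add, Matrix.add_mul, Matrix.mul_assoc]
    _ = Rᴴ * R := by
        rw [hUU, Matrix.mul_one, conjTranspose_of_ite_mul hzero, diagonal_add]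
        simp

end RectangularDiagonal

section Gsvd

variable {m n : ℕ} (hmn : m ≤ n) {α : Fin n → ℝ} (hα0 : ∀ k, 0 ≤ α k) (hmono : Antitone α)
  {U : Matrix (Fin m) (Fin m) ℂ} (hU : U ∈ unitaryGroup (Fin m) ℂ) {R : Matrix (Fin n) (Fin n) ℂ}
  {A : Matrix (Fin m) (Fin n) ℂ}
  (hA : A = U * (of fun (k : Fin m) (l : Fin n) =>
    if (k : ℕ) = (l : ℕ) then (α l : ℂ) else 0) * R)
  {t : ℕ} (ht : t ≤ m)
include hmn hα0 hmono hU hA ht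

lemma iSup_re_trace_gsvd (hR : IsUnit R.det) :
    ⨆ Φ : unitaryGroup (Fin m) ℂ,
      (trace (Aᴴ * (Φ : Matrix (Fin m) (Fin m) ℂ)ᴴ * leadingProj m t *
        (Φ : Matrix (Fin m) (Fin m) ℂ) * A * (Rᴴ * R)⁻¹)).re =
      ∑ j : Fin m with j.val < t, α (Fin.castLE hmn j) ^ 2 := by
  set F : unitaryGroup (Fin m) ℂ → ℝ := fun Ψ =>
    (trace (leadingProj m t * (Ψ : Matrix (Fin m) (Fin m) ℂ) *
      diagonal (fun j => ((α (Fin.castLE hmn j) ^ 2 : ℝ) : ℂ)) *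
      (Ψ : Matrix (Fin m) (Fin m) ℂ)ᴴ)).re
  have hpoint : ∀ Φ : unitaryGroup (Fin m) ℂ,
      (trace (Aᴴ * (Φ : Matrix (Fin m) (Fin m) ℂ)ᴴ * leadingProj m t *
        (Φ : Matrix (Fin m) (Fin m) ℂ) * A * (Rᴴ * R)⁻¹)).re = F (Φ * ⟨U, hU⟩) := by
    intro Φ
    set SigmaA := of fun (k : Fin m) (l : Fin n) => if (k : ℕ) = (l : ℕ) then (α l : ℂ) else 0
    set Φ' := (Φ : Matrix (Fin m) (Fin m) ℂ)
    rw [hA]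
    congr 1
    calc _ = trace ((U * SigmaA * R)ᴴ * (Φ'ᴴ * leadingProj m t * Φ') * (U * SigmaA * R) *
          (Rᴴ * R)⁻¹) := by
          simp only [Matrix.mul_assoc]
      _ = trace (Φ'ᴴ * leadingProj m t * Φ' * (U * SigmaA) * (U * SigmaA)ᴴ) :=
          trace_conjTranspose_mul_mul_mul_inv hR _ _
      _ = trace (leadingProj m t * (Φ' * U) * (SigmaA * SigmaAᴴ) * (Φ' * U)ᴴ) := by
          simp only [conjTranspose_mul, Matrix.mul_assoc]
          rw [trace_mul_comm]
          simp only [Matrix.mul_assoc]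
      _ = _ := by rw [of_ite_mul_conjTranspose hmn]; rfl
  rw [iSup_congr hpoint, iSup_comp_mul_right F]
  exact iSup_re_trace_leadingProj_conj (fun _ => sq_nonneg _)
    (fun i j hij => pow_le_pow_left₀ (hα0 _) (hmono ((Fin.castLE_le_castLE_iff hmn).2 hij)) 2) ht

lemma iSup_norm_trace_gsvd {S : Matrix (Fin n) (Fin n) ℂ} (hS : S.IsHermitian)
    (hSdet : IsUnit S.det) (hRS : Rᴴ * R = S * S) :
    ⨆ W3 : unitaryGroup (Fin n) ℂ, ⨆ W4 : unitaryGroup (Fin m) ℂ,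
      ‖trace ((W3 : Matrix (Fin n) (Fin n) ℂ) * S⁻¹ * Aᴴ * (W4 : Matrix (Fin m) (Fin m) ℂ) *
        of (fun (k : Fin m) (l : Fin n) =>
          if (k : ℕ) = (l : ℕ) ∧ (k : ℕ) < t then (1 : ℂ) else 0))‖ =
      ∑ j : Fin m with j.val < t, α (Fin.castLE hmn j) := by
  set F : unitaryGroup (Fin n) ℂ → unitaryGroup (Fin m) ℂ → ℝ := fun P Q =>
    ‖trace (leadingProj m t *
      (P : Matrix (Fin n) (Fin n) ℂ).submatrix (Fin.castLE hmn) (Fin.castLE hmn) *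
      diagonal (fun j => (α (Fin.castLE hmn j) : ℂ)) * (Q : Matrix (Fin m) (Fin m) ℂ))‖
  have hV := inv_mul_conjTranspose_mem_unitaryGroup hS hSdet hRS
  have hpoint : ∀ (W3 : unitaryGroup (Fin n) ℂ) (W4 : unitaryGroup (Fin m) ℂ),
      ‖trace ((W3 : Matrix (Fin n) (Fin n) ℂ) * S⁻¹ * Aᴴ * (W4 : Matrix (Fin m) (Fin m) ℂ) *
        of (fun (k : Fin m) (l : Fin n) =>
          if (k : ℕ) = (l : ℕ) ∧ (k : ℕ) < t then (1 : ℂ) else 0))‖ =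
      F (W3 * ⟨S⁻¹ * Rᴴ, hV⟩) (star ⟨U, hU⟩ * W4) := by
    intro W3 W4
    rw [hA, of_ite_and_lt_eq_leadingProj_mul hmn, of_ite_eq_diagonal_mul_submatrix_one hmn]
    simp only [F, Submonoid.coe_mul, Unitary.coe_star, star_eq_conjTranspose,
      ← one_submatrix_mul_mul_conjTranspose]
    set J := (1 : Matrix (Fin n) (Fin n) ℂ).submatrix (Fin.castLE hmn) id
    set D := diagonal fun j => (α (Fin.castLE hmn j) : ℂ)
    have hD : Dᴴ = D := by simp [D, diagonal_conjTranspose]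
    set W3' := (W3 : Matrix (Fin n) (Fin n) ℂ)
    set W4' := (W4 : Matrix (Fin m) (Fin m) ℂ)
    congr 1
    calc _ = trace ((W3' * S⁻¹ * Rᴴ * Jᴴ * Dᴴ * Uᴴ * W4') * (leadingProj m t * J)) := by
          simp only [conjTranspose_mul, Matrix.mul_assoc]
      _ = trace ((leadingProj m t * J) * (W3' * S⁻¹ * Rᴴ * Jᴴ * Dᴴ * Uᴴ * W4')) :=
          trace_mul_comm _ _
      _ = _ := by simp only [hD, Matrix.mul_assoc]
  rw [iSup_congr fun W3 => iSup_congr fun W4 => hpoint W3 W4,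
    iSup_congr fun W3 => iSup_comp_mul_left (F _) _,
    iSup_comp_mul_right (fun P => ⨆ Q, F P Q)]
  exact iSup_norm_trace_leadingProj_submatrix hmn (fun _ => hα0 _)
    (hmono.comp_monotone fun _ _ hij => (Fin.castLE_le_castLE_iff hmn).2 hij) ht

end Gsvd

theorem stmt17_general
    {m p n : ℕ} (hmn : m < n)
    (A : Matrix (Fin m) (Fin n) ℂ) (B : Matrix (Fin p) (Fin n) ℂ)
    (U : Matrix (Fin m) (Fin m) ℂ) (hU : U ∈ Matrix.unitaryGroup (Fin m) ℂ)
    (R : Matrix (Fin n) (Fin n) ℂ) (hR : IsUnit R.det)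
    (α : Fin n → ℝ)
    (hα0 : ∀ k, 0 ≤ α k) (hmono : Antitone α)
    (hzero : ∀ k : Fin n, m ≤ (k : ℕ) → α k = 0)
    (hA : A = U * (Matrix.of fun (k : Fin m) (l : Fin n) =>
        if (k : ℕ) = (l : ℕ) then Complex.ofReal (α l) else 0) * R)
    (hBB : Bᴴ * B = Rᴴ * Matrix.diagonal (fun l => Complex.ofReal (1 - α l ^ 2)) * R)
    (S : Matrix (Fin n) (Fin n) ℂ) (hS : S.PosDef)
    (hSsq : S * S = Aᴴ * A + Bᴴ * B)
 :
    ((m < n / 2 →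
      (∀ i : Fin n, (i : ℕ) < m →
        (α i ^ 2 =
(⨆ Φ : Matrix.unitaryGroup (Fin m) ℂ,
      (Matrix.trace (Aᴴ * (Φ : Matrix (Fin m) (Fin m) ℂ)ᴴ *
        Matrix.diagonal (fun k : Fin m => if (k : ℕ) ≤ (i : ℕ) then (1 : ℂ) else 0) *
        (Φ : Matrix (Fin m) (Fin m) ℂ) * A * (Aᴴ * A + Bᴴ * B)⁻¹)).re) -
(⨆ Φ : Matrix.unitaryGroup (Fin m) ℂ,
      (Matrix.trace (Aᴴ * (Φ : Matrix (Fin m) (Fin m) ℂ)ᴴ *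
        Matrix.diagonal (fun k : Fin m => if (k : ℕ) < (i : ℕ) then (1 : ℂ) else 0) *
        (Φ : Matrix (Fin m) (Fin m) ℂ) * A * (Aᴴ * A + Bᴴ * B)⁻¹)).re)) ∧
        (α i =
(⨆ W3 : Matrix.unitaryGroup (Fin n) ℂ, ⨆ W4 : Matrix.unitaryGroup (Fin m) ℂ,
      Norm.norm (Matrix.trace ((W3 : Matrix (Fin n) (Fin n) ℂ) * S⁻¹ * Aᴴ *
        (W4 : Matrix (Fin m) (Fin m) ℂ) *
        Matrix.of (fun (k : Fin m) (l : Fin n) =>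
          if (k : ℕ) = (l : ℕ) ∧ (k : ℕ) ≤ (i : ℕ) then (1 : ℂ) else 0)))) -
(⨆ W3 : Matrix.unitaryGroup (Fin n) ℂ, ⨆ W4 : Matrix.unitaryGroup (Fin m) ℂ,
      Norm.norm (Matrix.trace ((W3 : Matrix (Fin n) (Fin n) ℂ) * S⁻¹ * Aᴴ *
        (W4 : Matrix (Fin m) (Fin m) ℂ) *
        Matrix.of (fun (k : Fin m) (l : Fin n) =>
          if (k : ℕ) = (l : ℕ) ∧ (k : ℕ) < (i : ℕ) then (1 : ℂ) else 0)))))) ∧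
      (∀ k : Fin n, m ≤ (k : ℕ) → (k : ℕ) < n / 2 → α k = 0)) ∧
     (n / 2 ≤ m →
      ∀ i : Fin n, (i : ℕ) + 1 ≤ n / 2 →
        (α i ^ 2 =
(⨆ Φ : Matrix.unitaryGroup (Fin m) ℂ,
      (Matrix.trace (Aᴴ * (Φ : Matrix (Fin m) (Fin m) ℂ)ᴴ *
        Matrix.diagonal (fun k : Fin m => if (k : ℕ) ≤ (i : ℕ) then (1 : ℂ) else 0) *
        (Φ : Matrix (Fin m) (Fin m) ℂ) * A * (Aᴴ * A + Bᴴ * B)⁻¹)).re) -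
(⨆ Φ : Matrix.unitaryGroup (Fin m) ℂ,
      (Matrix.trace (Aᴴ * (Φ : Matrix (Fin m) (Fin m) ℂ)ᴴ *
        Matrix.diagonal (fun k : Fin m => if (k : ℕ) < (i : ℕ) then (1 : ℂ) else 0) *
        (Φ : Matrix (Fin m) (Fin m) ℂ) * A * (Aᴴ * A + Bᴴ * B)⁻¹)).re)) ∧
        (α i =
(⨆ W3 : Matrix.unitaryGroup (Fin n) ℂ, ⨆ W4 : Matrix.unitaryGroup (Fin m) ℂ,
      Norm.norm (Matrix.trace ((W3 : Matrix (Fin n) (Fin n) ℂ) * S⁻¹ * Aᴴ *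
        (W4 : Matrix (Fin m) (Fin m) ℂ) *
        Matrix.of (fun (k : Fin m) (l : Fin n) =>
          if (k : ℕ) = (l : ℕ) ∧ (k : ℕ) ≤ (i : ℕ) then (1 : ℂ) else 0)))) -
(⨆ W3 : Matrix.unitaryGroup (Fin n) ℂ, ⨆ W4 : Matrix.unitaryGroup (Fin m) ℂ,
      Norm.norm (Matrix.trace ((W3 : Matrix (Fin n) (Fin n) ℂ) * S⁻¹ * Aᴴ *
        (W4 : Matrix (Fin m) (Fin m) ℂ) *
        Matrix.of (fun (k : Fin m) (l : Fin n) =>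
          if (k : ℕ) = (l : ℕ) ∧ (k : ℕ) < (i : ℕ) then (1 : ℂ) else 0))))))) := by
  have hM := conjTranspose_mul_add_eq_of_gsvd hzero hU hA hBB
  have hRS : Rᴴ * R = S * S := (hSsq.trans hM).symm
  have hSdet : IsUnit S.det := (isUnit_iff_isUnit_det S).1 hS.isUnit
  refine ⟨fun _ => ⟨fun i hi => ?_, fun k hk _ => hzero k hk⟩, fun _ i hi => ?_⟩
  all_goals
    have hi' : (i : ℕ) < m := by omega
    simp only [← Nat.lt_add_one_iff]
    rw [hM, iSup_re_trace_gsvd hmn.le hα0 hmono hU hA hi' hR,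
      iSup_re_trace_gsvd hmn.le hα0 hmono hU hA hi'.le hR,
      iSup_norm_trace_gsvd hmn.le hα0 hmono hU hA hi' hS.isHermitian hSdet hRS,
      iSup_norm_trace_gsvd hmn.le hα0 hmono hU hA hi'.le hS.isHermitian hSdet hRS,
      sum_filter_lt_succ _ hi', sum_filter_lt_succ _ hi']
    exact ⟨(add_sub_cancel_left _ _).symm, (add_sub_cancel_left _ _).symm⟩

theorem stmt17
    {m p n : ℕ} (hmn : m < n)
    (A : Matrix (Fin m) (Fin n) ℂ) (B : Matrix (Fin p) (Fin n) ℂ)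
    (hrank : (Matrix.fromRows A B).rank = n)
    (U : Matrix (Fin m) (Fin m) ℂ) (hU : U ∈ Matrix.unitaryGroup (Fin m) ℂ)
    (R : Matrix (Fin n) (Fin n) ℂ) (hR : IsUnit R.det)
    (α : Fin n → ℝ)
    (hα0 : ∀ k, 0 ≤ α k) (hα1 : ∀ k, α k ≤ 1) (hmono : Antitone α)
    (hzero : ∀ k : Fin n, m ≤ (k : ℕ) → α k = 0)
    (hA : A = U * (Matrix.of fun (k : Fin m) (l : Fin n) =>
        if (k : ℕ) = (l : ℕ) then Complex.ofReal (α l) else 0) * R)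
    (hBB : Bᴴ * B = Rᴴ * Matrix.diagonal (fun l => Complex.ofReal (1 - α l ^ 2)) * R)
    (S : Matrix (Fin n) (Fin n) ℂ) (hS : S.PosDef)
    (hSsq : S * S = Aᴴ * A + Bᴴ * B)
 :
    ((m < n / 2 →
      (∀ i : Fin n, (i : ℕ) < m →
        (α i ^ 2 =
(⨆ Φ : Matrix.unitaryGroup (Fin m) ℂ,
      (Matrix.trace (Aᴴ * (Φ : Matrix (Fin m) (Fin m) ℂ)ᴴ *
        Matrix.diagonal (fun k : Fin m => if (k : ℕ) ≤ (i : ℕ) then (1 : ℂ) else 0) *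
        (Φ : Matrix (Fin m) (Fin m) ℂ) * A * (Aᴴ * A + Bᴴ * B)⁻¹)).re) -
(⨆ Φ : Matrix.unitaryGroup (Fin m) ℂ,
      (Matrix.trace (Aᴴ * (Φ : Matrix (Fin m) (Fin m) ℂ)ᴴ *
        Matrix.diagonal (fun k : Fin m => if (k : ℕ) < (i : ℕ) then (1 : ℂ) else 0) *
        (Φ : Matrix (Fin m) (Fin m) ℂ) * A * (Aᴴ * A + Bᴴ * B)⁻¹)).re)) ∧
        (α i =
(⨆ W3 : Matrix.unitaryGroup (Fin n) ℂ, ⨆ W4 : Matrix.unitaryGroup (Fin m) ℂ,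
      Norm.norm (Matrix.trace ((W3 : Matrix (Fin n) (Fin n) ℂ) * S⁻¹ * Aᴴ *
        (W4 : Matrix (Fin m) (Fin m) ℂ) *
        Matrix.of (fun (k : Fin m) (l : Fin n) =>
          if (k : ℕ) = (l : ℕ) ∧ (k : ℕ) ≤ (i : ℕ) then (1 : ℂ) else 0)))) -
(⨆ W3 : Matrix.unitaryGroup (Fin n) ℂ, ⨆ W4 : Matrix.unitaryGroup (Fin m) ℂ,
      Norm.norm (Matrix.trace ((W3 : Matrix (Fin n) (Fin n) ℂ) * S⁻¹ * Aᴴ *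
        (W4 : Matrix (Fin m) (Fin m) ℂ) *
        Matrix.of (fun (k : Fin m) (l : Fin n) =>
          if (k : ℕ) = (l : ℕ) ∧ (k : ℕ) < (i : ℕ) then (1 : ℂ) else 0)))))) ∧
      (∀ k : Fin n, m ≤ (k : ℕ) → (k : ℕ) < n / 2 → α k = 0)) ∧
     (n / 2 ≤ m →
      ∀ i : Fin n, (i : ℕ) + 1 ≤ n / 2 →
        (α i ^ 2 =
(⨆ Φ : Matrix.unitaryGroup (Fin m) ℂ,
      (Matrix.trace (Aᴴ * (Φ : Matrix (Fin m) (Fin m) ℂ)ᴴ *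
        Matrix.diagonal (fun k : Fin m => if (k : ℕ) ≤ (i : ℕ) then (1 : ℂ) else 0) *
        (Φ : Matrix (Fin m) (Fin m) ℂ) * A * (Aᴴ * A + Bᴴ * B)⁻¹)).re) -
(⨆ Φ : Matrix.unitaryGroup (Fin m) ℂ,
      (Matrix.trace (Aᴴ * (Φ : Matrix (Fin m) (Fin m) ℂ)ᴴ *
        Matrix.diagonal (fun k : Fin m => if (k : ℕ) < (i : ℕ) then (1 : ℂ) else 0) *
        (Φ : Matrix (Fin m) (Fin m) ℂ) * A * (Aᴴ * A + Bᴴ * B)⁻¹)).re)) ∧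
        (α i =
(⨆ W3 : Matrix.unitaryGroup (Fin n) ℂ, ⨆ W4 : Matrix.unitaryGroup (Fin m) ℂ,
      Norm.norm (Matrix.trace ((W3 : Matrix (Fin n) (Fin n) ℂ) * S⁻¹ * Aᴴ *
        (W4 : Matrix (Fin m) (Fin m) ℂ) *
        Matrix.of (fun (k : Fin m) (l : Fin n) =>
          if (k : ℕ) = (l : ℕ) ∧ (k : ℕ) ≤ (i : ℕ) then (1 : ℂ) else 0)))) -
(⨆ W3 : Matrix.unitaryGroup (Fin n) ℂ, ⨆ W4 : Matrix.unitaryGroup (Fin m) ℂ,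
      Norm.norm (Matrix.trace ((W3 : Matrix (Fin n) (Fin n) ℂ) * S⁻¹ * Aᴴ *
        (W4 : Matrix (Fin m) (Fin m) ℂ) *
        Matrix.of (fun (k : Fin m) (l : Fin n) =>
          if (k : ℕ) = (l : ℕ) ∧ (k : ℕ) < (i : ℕ) then (1 : ℂ) else 0))))))) :=
  stmt17_general hmn A B U hU R hR α hα0 hmono hzero hA hBB S hS hSsq
end
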